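/- Let V be a finite-dimensional Γ-graded vector space with non-degenerate ε-symmetric form. For f ∈ so_ε(V,(·,·)), the image of μ_can^{-1}(f) under the quantisation map Q_2 into the ε-Clifford algebra equals -(1/2) Σ_i f(e^i) e_i (Clifford product), where {e_i} is a basis of V and {e^i} its dual basis. -/

import Mathlib

open scoped BigOperators TensorProduct

/-- A commutation factor on an abelian group `Γ` with values in a field `k`. -/
structure CommFactor (k : Type) [Field k] (Γ : Type) [AddCommGroup Γ] : Type where
  eps : Γ → Γ → k
  eps_symm : ∀ a b, eps a b * eps b a = 1
  eps_add_left : ∀ a b c, eps (a + b) c = eps a c * eps b c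
  eps_add_right : ∀ a b c, eps a (b + c) = eps a b * eps a c

/-- The cocycle `p(σ; v₁,…,vₙ)` of the sign-twisted action of `Sₙ` on `V^{⊗n}`,
expressed in terms of the degrees `d i` of the homogeneous vectors. -/
noncomputable def cocycle {k : Type} [Field k] {Γ : Type} [AddCommGroup Γ]
    (E : CommFactor k Γ) {n : ℕ} (σ : Equiv.Perm (Fin n)) (d : Fin n → Γ) : k :=
  ((Equiv.Perm.sign σ : ℤ) : k) *
    ∏ x ∈ Finset.univ.filter
        (fun x : Fin n × Fin n => x.1 < x.2 ∧ σ⁻¹ x.2 < σ⁻¹ x.1),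
      E.eps (d x.1) (d x.2)

/-- The defining relations of the `ε`-Clifford algebra of `(V, P)`.
Taking `P = 0` yields the `ε`-exterior algebra. -/
inductive CliffRel {k Γ V : Type} [Field k] [AddCommGroup Γ] [AddCommGroup V] [Module k V]
    (E : CommFactor k Γ) (𝒱 : Γ → Submodule k V) (P : V →ₗ[k] V →ₗ[k] k) :
    TensorAlgebra k V → TensorAlgebra k V → Prop
  | mk (a b : Γ) (x y : V) (hx : x ∈ 𝒱 a) (hy : y ∈ 𝒱 b) :
      CliffRel E 𝒱 P
        (TensorAlgebra.ι k x * TensorAlgebra.ι k y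
          + E.eps a b • (TensorAlgebra.ι k y * TensorAlgebra.ι k x))
        ((2 * P x y) • (1 : TensorAlgebra k V))

/-- The `ε`-Clifford algebra `C_ε(V, P)`; for `P = 0` this is the `ε`-exterior algebra. -/
abbrev Cliff {k Γ V : Type} [Field k] [AddCommGroup Γ] [AddCommGroup V] [Module k V]
    (E : CommFactor k Γ) (𝒱 : Γ → Submodule k V) (P : V →ₗ[k] V →ₗ[k] k) :=
  RingQuot (CliffRel E 𝒱 P)

/-- The canonical image of `v : V` in the `ε`-Clifford algebra. -/
noncomputable def cl {k Γ V : Type} [Field k] [AddCommGroup Γ] [AddCommGroup V] [Module k V]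
    (E : CommFactor k Γ) (𝒱 : Γ → Submodule k V) (P : V →ₗ[k] V →ₗ[k] k) (v : V) :
    Cliff E 𝒱 P :=
  RingQuot.mkAlgHom k (CliffRel E 𝒱 P) (TensorAlgebra.ι k v)

/-- The product `v₁ ⋯ vₙ` in the `ε`-Clifford algebra. -/
noncomputable def clProd {k Γ V : Type} [Field k] [AddCommGroup Γ] [AddCommGroup V] [Module k V]
    (E : CommFactor k Γ) (𝒱 : Γ → Submodule k V) (P : V →ₗ[k] V →ₗ[k] k)
    {n : ℕ} (v : Fin n → V) : Cliff E 𝒱 P :=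
  (List.ofFn fun i => cl E 𝒱 P (v i)).prod

/-- The `n`-th `ε`-exterior power `Λ^n_ε(V)`, as a subspace of the `ε`-exterior algebra. -/
noncomputable def extPow {k Γ V : Type} [Field k] [AddCommGroup Γ] [AddCommGroup V] [Module k V]
    (E : CommFactor k Γ) (𝒱 : Γ → Submodule k V) (n : ℕ) :
    Submodule k (Cliff E 𝒱 (0 : V →ₗ[k] V →ₗ[k] k)) :=
  Submodule.span k {z | ∃ v : Fin n → V, z = clProd E 𝒱 0 v}

/-- The wedge `v₁ ∧ ⋯ ∧ vₙ` as an element of `Λ^n_ε(V)`. -/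
noncomputable def extGen {k Γ V : Type} [Field k] [AddCommGroup Γ] [AddCommGroup V] [Module k V]
    (E : CommFactor k Γ) (𝒱 : Γ → Submodule k V) {n : ℕ} (v : Fin n → V) :
    ↥(extPow E 𝒱 n) :=
  ⟨clProd E 𝒱 0 v, Submodule.subset_span ⟨v, rfl⟩⟩

/-- The set of homogeneous elements of the `ε`-orthogonal colour Lie algebra
`so_ε(V, P)`; the algebra itself is its span. -/
def soSet {k Γ V : Type} [Field k] [AddCommGroup Γ] [AddCommGroup V] [Module k V]
    (E : CommFactor k Γ) (𝒱 : Γ → Submodule k V) (P : V →ₗ[k] V →ₗ[k] k) :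
    Set (Module.End k V) :=
  {f | ∃ γ : Γ, (∀ a : Γ, ∀ x ∈ 𝒱 a, f x ∈ 𝒱 (a + γ)) ∧
       (∀ a b : Γ, ∀ x ∈ 𝒱 a, ∀ y ∈ 𝒱 b, P (f x) y + E.eps γ a * P x (f y) = 0)}


/-!
For homogeneous `x ∈ V_a`, `y ∈ V_b` the Clifford relation `xy + ε(a,b) yx = 2 (x,y)` gives
`Q₂(x ∧ y) = ½ (xy - ε(a,b) yx) = xy - (x,y)`, and by linearity this holds for every `x`. Summing
over `x = f(eⁱ)`, `y = eᵢ` reduces the claim to `Σᵢ (f(eⁱ), eᵢ) = 0`.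

For homogeneous `f ∈ so_ε` of degree `γ`, let `π` act on `V_a` by `ε(a,a)`. The ε-symmetry of the
form turns `Σᵢ (f(eⁱ), eᵢ)` into `Σᵢ ε(dᵢ,dᵢ) (eᵢ, f(eⁱ)) = tr(π f)`, read off in the basis `(eⁱ)`,
while skew-adjointness of `f` turns the same sum into `-Σᵢ ε(dᵢ,dᵢ) (f(eᵢ), eⁱ) = -tr(f π)`, read
off in the basis `(eᵢ)` (the factors `ε(dᵢ,γ)` drop out because the diagonal of `f` vanishes unless
`γ = 0`). Since `tr(π f) = tr(f π)` and `2 ≠ 0`, the sum is zero.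
-/

namespace CommFactor

variable {k Γ : Type} [Field k] [AddCommGroup Γ] (E : CommFactor k Γ)

lemma eps_ne_zero (a b : Γ) : E.eps a b ≠ 0 :=
  left_ne_zero_of_mul_eq_one (E.eps_symm a b)

lemma eps_zero_left (a : Γ) : E.eps 0 a = 1 := by
  have h := E.eps_add_left 0 0 a
  rw [add_zero] at h
  exact (mul_eq_left₀ (E.eps_ne_zero 0 a)).mp h.symm

lemma eps_zero_right (a : Γ) : E.eps a 0 = 1 := by
  simpa [eps_zero_left] using E.eps_symm a 0

lemma eps_neg_left (a b : Γ) : E.eps (-a) b = (E.eps a b)⁻¹ :=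
  eq_inv_of_mul_eq_one_left (by rw [← E.eps_add_left, neg_add_cancel, eps_zero_left])

lemma eps_neg_right (a b : Γ) : E.eps a (-b) = (E.eps a b)⁻¹ :=
  eq_inv_of_mul_eq_one_left (by rw [← E.eps_add_right, neg_add_cancel, eps_zero_right])

lemma eps_self_inv (a : Γ) : (E.eps a a)⁻¹ = E.eps a a :=
  inv_eq_of_mul_eq_one_right (E.eps_symm a a)

lemma eps_neg_self (a : Γ) : E.eps (-a) a = E.eps a a := by
  rw [eps_neg_left, eps_self_inv]

lemma eps_neg_neg (a : Γ) : E.eps (-a) (-a) = E.eps a a := by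
  rw [eps_neg_left, eps_neg_right, inv_inv]

end CommFactor

lemma cocycle_one {k Γ : Type} [Field k] [AddCommGroup Γ] (E : CommFactor k Γ) (d : Fin 2 → Γ) :
    cocycle E 1 d = 1 := by
  have hinv : Finset.univ.filter (fun x : Fin 2 × Fin 2 => x.1 < x.2 ∧ x.2 < x.1) = ∅ := by decide
  simp [cocycle, hinv]

lemma cocycle_swap_zero_one {k Γ : Type} [Field k] [AddCommGroup Γ] (E : CommFactor k Γ)
    (d : Fin 2 → Γ) : cocycle E (Equiv.swap 0 1) d = -E.eps (d 0) (d 1) := by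
  have hinv : Finset.univ.filter (fun x : Fin 2 × Fin 2 =>
      x.1 < x.2 ∧ (Equiv.swap 0 1)⁻¹ x.2 < (Equiv.swap 0 1)⁻¹ x.1) = {(0, 1)} := by decide
  rw [cocycle, hinv]
  simp

section Clifford

variable {k Γ V : Type} [Field k] [AddCommGroup Γ] [AddCommGroup V] [Module k V]
  (E : CommFactor k Γ) (𝒱 : Γ → Submodule k V) (P : V →ₗ[k] V →ₗ[k] k)

lemma cl_zero : cl E 𝒱 P 0 = 0 := by
  simp [cl]

lemma cl_add (x y : V) : cl E 𝒱 P (x + y) = cl E 𝒱 P x + cl E 𝒱 P y := by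
  simp [cl]

lemma clProd_two (x y : V) : clProd E 𝒱 P ![x, y] = cl E 𝒱 P x * cl E 𝒱 P y := by
  simp [clProd, List.ofFn_succ]

lemma cl_mul_add_eps_smul_mul {a b : Γ} {x y : V} (hx : x ∈ 𝒱 a) (hy : y ∈ 𝒱 b) :
    cl E 𝒱 P x * cl E 𝒱 P y + E.eps a b • (cl E 𝒱 P y * cl E 𝒱 P x) = (2 * P x y) • 1 := by
  simpa [cl] using RingQuot.mkAlgHom_rel k (CliffRel.mk (E := E) (𝒱 := 𝒱) (P := P) a b x y hx hy)

lemma extGen_zero_left (y : V) : extGen E 𝒱 ![0, y] = 0 :=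
  Subtype.ext (by simp [extGen, clProd_two, cl_zero])

lemma extGen_add_left (x x' y : V) :
    extGen E 𝒱 ![x + x', y] = extGen E 𝒱 ![x, y] + extGen E 𝒱 ![x', y] :=
  Subtype.ext (by simp only [extGen, Submodule.coe_add, clProd_two, cl_add, add_mul])

lemma sum_cocycle_smul_clProd_fin_two (x y : V) (a b : Γ) :
    ∑ σ : Equiv.Perm (Fin 2), cocycle E σ ![a, b] • clProd E 𝒱 P (![x, y] ∘ σ)
      = cl E 𝒱 P x * cl E 𝒱 P y - E.eps a b • (cl E 𝒱 P y * cl E 𝒱 P x) := by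
  have huniv : (Finset.univ : Finset (Equiv.Perm (Fin 2))) = {1, Equiv.swap 0 1} := by decide
  have hswap : ![x, y] ∘ Equiv.swap 0 1 = ![y, x] := by ext i; fin_cases i <;> rfl
  rw [huniv, Finset.sum_pair (by decide), cocycle_one, cocycle_swap_zero_one, hswap,
    Equiv.Perm.coe_one, Function.comp_id, clProd_two, clProd_two, one_smul]
  simp only [Matrix.cons_val_zero, Matrix.cons_val_one]
  rw [sub_eq_add_neg]
  exact congrArg _ (neg_smul (E.eps a b) (cl E 𝒱 P y * cl E 𝒱 P x))

lemma two_inv_smul_sub_eps_smul (h2 : (2 : k) ≠ 0) {a b : Γ} {x y : V} (hx : x ∈ 𝒱 a)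
    (hy : y ∈ 𝒱 b) :
    (2 : k)⁻¹ • (cl E 𝒱 P x * cl E 𝒱 P y - E.eps a b • (cl E 𝒱 P y * cl E 𝒱 P x))
      = cl E 𝒱 P x * cl E 𝒱 P y - P x y • 1 := by
  rw [eq_sub_of_add_eq' (cl_mul_add_eps_smul_mul E 𝒱 P hx hy)]
  calc (2 : k)⁻¹ • (cl E 𝒱 P x * cl E 𝒱 P y - ((2 * P x y) • 1 - cl E 𝒱 P x * cl E 𝒱 P y))
      = (2 : k)⁻¹ • (2 : k) • (cl E 𝒱 P x * cl E 𝒱 P y - P x y • 1) := by module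
    _ = cl E 𝒱 P x * cl E 𝒱 P y - P x y • 1 := by rw [smul_smul, inv_mul_cancel₀ h2, one_smul]

end Clifford

section DualPair

variable {k V ι : Type} [Field k] [AddCommGroup V] [Module k V] [DecidableEq ι]
  {P : V →ₗ[k] V →ₗ[k] k} {e : Module.Basis ι k V} {fd : ι → V}

lemma apply_dual_eq_repr (hfd : ∀ i j, P (e i) (fd j) = if i = j then (1 : k) else 0)
    (v : V) (j : ι) : P v (fd j) = e.repr v j := by
  have hcoord : P.flip (fd j) = e.coord j :=
    e.ext fun i => by simp [hfd, Finsupp.single_apply]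
  exact LinearMap.congr_fun hcoord v

lemma linearIndependent_of_pairing [Fintype ι]
    (hfd : ∀ i j, P (e i) (fd j) = if i = j then (1 : k) else 0) :
    LinearIndependent k fd := by
  rw [Fintype.linearIndependent_iff]
  intro c hc i
  simpa [hfd] using congrArg (P (e i)) hc

lemma trace_eq_sum_pairing_map_dual [Fintype ι] [FiniteDimensional k V]
    (hfd : ∀ i j, P (e i) (fd j) = if i = j then (1 : k) else 0) (h : V →ₗ[k] V) :
    LinearMap.trace k V h = ∑ i, P (e i) (h (fd i)) := by
  let b := basisOfLinearIndependentOfCardEqFinrank' fd (linearIndependent_of_pairing hfd)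
    (Module.finrank_eq_card_basis e).symm
  have hb : ∀ i, b i = fd i := fun i => by simp [b]
  have hrepr : ∀ w i, b.repr w i = P (e i) w := fun w i => by
    have hcoord : b.coord i = P (e i) := b.ext fun j => by
      rw [Module.Basis.coord_apply, b.repr_self, hb, hfd, Finsupp.single_apply]
      exact if_congr eq_comm rfl rfl
    exact LinearMap.congr_fun hcoord w
  simp [LinearMap.trace_eq_matrix_trace k b, Matrix.trace, LinearMap.toMatrix_apply, hrepr, hb]

lemma trace_eq_sum_pairing_map_basis [Fintype ι]
    (hfd : ∀ i j, P (e i) (fd j) = if i = j then (1 : k) else 0) (h : V →ₗ[k] V) :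
    LinearMap.trace k V h = ∑ i, P (h (e i)) (fd i) := by
  simp [LinearMap.trace_eq_matrix_trace k e, Matrix.trace, LinearMap.toMatrix_apply,
    apply_dual_eq_repr hfd]

end DualPair

section Parity

variable {k Γ V ι : Type} [Field k] [AddCommGroup Γ] [AddCommGroup V] [Module k V]
  (E : CommFactor k Γ) {𝒱 : Γ → Submodule k V} {P : V →ₗ[k] V →ₗ[k] k}
  {e : Module.Basis ι k V} {d : ι → Γ}

/-- The operator acting on `𝒱 a` by `ε(a, a)`, for a basis `e` of homogeneous vectors of
degrees `d`. -/
noncomputable def epsParity (e : Module.Basis ι k V) (d : ι → Γ) : V →ₗ[k] V :=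
  e.constr k fun i => E.eps (d i) (d i) • e i

lemma epsParity_basis (i : ι) : epsParity E e d (e i) = E.eps (d i) (d i) • e i :=
  e.constr_basis k _ i

lemma apply_epsParity_of_mem_left
    (hPdeg : ∀ a b : Γ, a + b ≠ 0 → ∀ v ∈ 𝒱 a, ∀ w ∈ 𝒱 b, P v w = 0)
    (he : ∀ i, e i ∈ 𝒱 (d i)) {b : Γ} {y : V} (hy : y ∈ 𝒱 b) (v : V) :
    P y (epsParity E e d v) = E.eps b b * P y v := by
  have h : P y ∘ₗ epsParity E e d = E.eps b b • P y := e.ext fun m => by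
    simp only [LinearMap.comp_apply, LinearMap.smul_apply, epsParity_basis, map_smul, smul_eq_mul]
    by_cases hbm : b + d m = 0
    · rw [eq_neg_of_add_eq_zero_right hbm, E.eps_neg_neg]
    · rw [hPdeg b (d m) hbm y hy (e m) (he m), mul_zero, mul_zero]
  exact LinearMap.congr_fun h v

lemma sum_eps_mul_pairing_map_dual_eq [Fintype ι] [DecidableEq ι] [FiniteDimensional k V]
    (hPdeg : ∀ a b : Γ, a + b ≠ 0 → ∀ v ∈ 𝒱 a, ∀ w ∈ 𝒱 b, P v w = 0)
    (he : ∀ i, e i ∈ 𝒱 (d i)) {fd : ι → V}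
    (hfd : ∀ i j, P (e i) (fd j) = if i = j then (1 : k) else 0) (h : V →ₗ[k] V) :
    ∑ i, E.eps (d i) (d i) * P (e i) (h (fd i))
      = ∑ i, E.eps (d i) (d i) * P (h (e i)) (fd i) := by
  calc ∑ i, E.eps (d i) (d i) * P (e i) (h (fd i))
      = ∑ i, P (e i) ((epsParity E e d ∘ₗ h) (fd i)) := by
        simp [apply_epsParity_of_mem_left E hPdeg he (he _)]
    _ = LinearMap.trace k V (epsParity E e d ∘ₗ h) := (trace_eq_sum_pairing_map_dual hfd _).symm
    _ = LinearMap.trace k V (h ∘ₗ epsParity E e d) := LinearMap.trace_mul_comm k _ _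
    _ = ∑ i, P ((h ∘ₗ epsParity E e d) (e i)) (fd i) := trace_eq_sum_pairing_map_basis hfd _
    _ = ∑ i, E.eps (d i) (d i) * P (h (e i)) (fd i) := by simp [epsParity_basis]

end Parity

lemma Module.Basis.repr_eq_zero_of_mem_of_ne {R M ι Γ : Type*} [Semiring R] [AddCommMonoid M]
    [Module R M] [DecidableEq Γ] {𝒱 : Γ → Submodule R M} [DirectSum.Decomposition 𝒱]
    (e : Module.Basis ι R M) {d : ι → Γ} (he : ∀ i, e i ∈ 𝒱 (d i))
    {c : Γ} {v : M} (hv : v ∈ 𝒱 c) {j : ι} (hj : c ≠ d j) : e.repr v j = 0 := by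
  let π : M →ₗ[R] M := (𝒱 (d j)).subtype ∘ₗ DirectSum.component R Γ (fun a => 𝒱 a) (d j) ∘ₗ
    (DirectSum.decomposeLinearEquiv 𝒱).toLinearMap
  have hπ : ∀ {a : Γ} {x : M}, x ∈ 𝒱 a → π x = if a = d j then x else 0 := by
    intro a x hx
    split_ifs with ha
    · subst ha; exact DirectSum.decompose_of_mem_same 𝒱 hx
    · exact DirectSum.decompose_of_mem_ne 𝒱 hx ha
  have hcoord : e.coord j ∘ₗ π = e.coord j := e.ext fun m => by
    by_cases hm : d m = d j
    · simp [hπ (he m), hm]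
    · simp [hπ (he m), hm, ne_of_apply_ne d hm]
  rw [← e.coord_apply, ← hcoord, LinearMap.comp_apply, hπ hv, if_neg hj, map_zero]

section Graded

variable {k Γ V ι : Type} [Field k] [AddCommGroup Γ] [DecidableEq Γ] [AddCommGroup V]
  [Module k V] (E : CommFactor k Γ) {𝒱 : Γ → Submodule k V} [DirectSum.Decomposition 𝒱]
  {P : V →ₗ[k] V →ₗ[k] k}

lemma apply_eq_eps_mul_apply_of_mem_right
    (hPsymm : ∀ a b : Γ, ∀ v ∈ 𝒱 a, ∀ w ∈ 𝒱 b, P v w = E.eps a b * P w v)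
    (hPdeg : ∀ a b : Γ, a + b ≠ 0 → ∀ v ∈ 𝒱 a, ∀ w ∈ 𝒱 b, P v w = 0)
    {b : Γ} {y : V} (hy : y ∈ 𝒱 b) (w : V) : P w y = E.eps b b * P y w := by
  induction w using DirectSum.Decomposition.inductionOn 𝒱 with
  | zero => simp
  | @homogeneous a w =>
    by_cases hab : a + b = 0
    · obtain rfl := eq_neg_of_add_eq_zero_left hab
      rw [hPsymm _ _ w w.2 y hy, E.eps_neg_self]
    · rw [hPdeg a b hab w w.2 y hy, hPdeg b a (by rwa [add_comm]) y hy w w.2, mul_zero]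
  | add w w' hw hw' => simp [hw, hw', mul_add]

lemma apply_add_eps_mul_apply_of_mem_left {g : V →ₗ[k] V} {γ : Γ}
    (hg : ∀ a b : Γ, ∀ x ∈ 𝒱 a, ∀ y ∈ 𝒱 b, P (g x) y + E.eps γ a * P x (g y) = 0)
    {a : Γ} {x : V} (hx : x ∈ 𝒱 a) (y : V) : P (g x) y + E.eps γ a * P x (g y) = 0 := by
  induction y using DirectSum.Decomposition.inductionOn 𝒱 with
  | zero => simp
  | homogeneous y => exact hg a _ x hx y y.2
  | add y y' hy hy' => simp only [map_add]; linear_combination hy + hy'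

lemma sum_apply_dual_eq_zero_of_mem_soSet [Fintype ι] [DecidableEq ι] [FiniteDimensional k V]
    (h2 : (2 : k) ≠ 0)
    (hPsymm : ∀ a b : Γ, ∀ v ∈ 𝒱 a, ∀ w ∈ 𝒱 b, P v w = E.eps a b * P w v)
    (hPdeg : ∀ a b : Γ, a + b ≠ 0 → ∀ v ∈ 𝒱 a, ∀ w ∈ 𝒱 b, P v w = 0)
    {e : Module.Basis ι k V} {d : ι → Γ} (he : ∀ i, e i ∈ 𝒱 (d i)) {fd : ι → V}
    (hfd : ∀ i j, P (e i) (fd j) = if i = j then (1 : k) else 0)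
    {g : Module.End k V} (hg : g ∈ soSet E 𝒱 P) :
    ∑ i, P (g (fd i)) (e i) = 0 := by
  obtain ⟨γ, hgdeg, hgskew⟩ := hg
  have hdiag : ∀ i, E.eps (d i) γ * P (g (e i)) (fd i) = P (g (e i)) (fd i) := fun i => by
    by_cases hγ : γ = 0
    · rw [hγ, E.eps_zero_right, one_mul]
    · rw [apply_dual_eq_repr hfd,
        e.repr_eq_zero_of_mem_of_ne he (hgdeg _ _ (he i)) (by simpa using hγ), mul_zero]
  have hskew : ∀ i, P (e i) (g (fd i)) = -(E.eps (d i) γ * P (g (e i)) (fd i)) := fun i => by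
    have h := apply_add_eps_mul_apply_of_mem_left E hgskew (he i) (fd i)
    calc P (e i) (g (fd i)) = E.eps (d i) γ * (E.eps γ (d i) * P (e i) (g (fd i))) := by
          rw [← mul_assoc, E.eps_symm, one_mul]
      _ = -(E.eps (d i) γ * P (g (e i)) (fd i)) := by
          rw [eq_neg_of_add_eq_zero_right h, mul_neg]
  have hanti : ∑ i, E.eps (d i) (d i) * P (g (e i)) (fd i)
      = -∑ i, E.eps (d i) (d i) * P (g (e i)) (fd i) :=
    calc ∑ i, E.eps (d i) (d i) * P (g (e i)) (fd i)
        = ∑ i, E.eps (d i) (d i) * P (e i) (g (fd i)) :=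
          (sum_eps_mul_pairing_map_dual_eq E hPdeg he hfd g).symm
      _ = -∑ i, E.eps (d i) (d i) * P (g (e i)) (fd i) := by
          simp only [hskew, hdiag, mul_neg, Finset.sum_neg_distrib]
  have hstr : ∑ i, E.eps (d i) (d i) * P (g (e i)) (fd i) = 0 :=
    (mul_eq_zero.mp (by linear_combination hanti : (2 : k) * _ = 0)).resolve_left h2
  calc ∑ i, P (g (fd i)) (e i) = ∑ i, E.eps (d i) (d i) * P (e i) (g (fd i)) := by
        simp only [apply_eq_eps_mul_apply_of_mem_right E hPsymm hPdeg (he _)]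
    _ = 0 := by rw [sum_eps_mul_pairing_map_dual_eq E hPdeg he hfd g, hstr]

lemma sum_apply_dual_eq_zero_of_mem_span [Fintype ι] [DecidableEq ι] [FiniteDimensional k V]
    (h2 : (2 : k) ≠ 0)
    (hPsymm : ∀ a b : Γ, ∀ v ∈ 𝒱 a, ∀ w ∈ 𝒱 b, P v w = E.eps a b * P w v)
    (hPdeg : ∀ a b : Γ, a + b ≠ 0 → ∀ v ∈ 𝒱 a, ∀ w ∈ 𝒱 b, P v w = 0)
    {e : Module.Basis ι k V} {d : ι → Γ} (he : ∀ i, e i ∈ 𝒱 (d i)) {fd : ι → V}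
    (hfd : ∀ i j, P (e i) (fd j) = if i = j then (1 : k) else 0)
    {f : Module.End k V} (hf : f ∈ Submodule.span k (soSet E 𝒱 P)) :
    ∑ i, P (f (fd i)) (e i) = 0 := by
  induction hf using Submodule.span_induction with
  | mem g hg => exact sum_apply_dual_eq_zero_of_mem_soSet E h2 hPsymm hPdeg he hfd hg
  | zero => simp
  | add f g _ _ hf hg => simp [Finset.sum_add_distrib, hf, hg]
  | smul c f _ hf => simp [← Finset.mul_sum, hf]

lemma quantisation_extGen_of_mem_right (h2 : (2 : k) ≠ 0)
    (Q2 : ↥(extPow E 𝒱 2) →ₗ[k] Cliff E 𝒱 P)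
    (hQ2 : ∀ (v : Fin 2 → V) (dv : Fin 2 → Γ), (∀ i, v i ∈ 𝒱 (dv i)) →
        Q2 (extGen E 𝒱 v)
          = (2 : k)⁻¹ • ∑ σ : Equiv.Perm (Fin 2),
              cocycle E σ dv • clProd E 𝒱 P (v ∘ σ))
    {b : Γ} {y : V} (hy : y ∈ 𝒱 b) (x : V) :
    Q2 (extGen E 𝒱 ![x, y]) = cl E 𝒱 P x * cl E 𝒱 P y - P x y • 1 := by
  induction x using DirectSum.Decomposition.inductionOn 𝒱 with
  | zero => simp [extGen_zero_left, cl_zero]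
  | @homogeneous a x =>
    rw [hQ2 ![x, y] ![a, b] (Fin.forall_fin_two.2 ⟨x.2, hy⟩), sum_cocycle_smul_clProd_fin_two,
      two_inv_smul_sub_eps_smul E 𝒱 P h2 x.2 hy]
  | add x x' hx hx' =>
    rw [extGen_add_left, map_add, hx, hx', cl_add, add_mul, map_add, LinearMap.add_apply,
      add_smul]
    abel

end Graded

theorem quantisation_momentMap_inverse_general {k Γ V : Type} [Field k] [AddCommGroup Γ]
    [DecidableEq Γ] [AddCommGroup V] [Module k V] [FiniteDimensional k V]
    {ι : Type} [Fintype ι] [DecidableEq ι]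
    (E : CommFactor k Γ) (𝒱 : Γ → Submodule k V) (hint : DirectSum.IsInternal 𝒱)
    (P : V →ₗ[k] V →ₗ[k] k)
    (hPsymm : ∀ a b : Γ, ∀ v ∈ 𝒱 a, ∀ w ∈ 𝒱 b, P v w = E.eps a b * P w v)
    (hPdeg : ∀ a b : Γ, a + b ≠ 0 → ∀ v ∈ 𝒱 a, ∀ w ∈ 𝒱 b, P v w = 0)
    (h2 : (2 : k) ≠ 0)
    (e : Module.Basis ι k V) (d : ι → Γ) (he : ∀ i, e i ∈ 𝒱 (d i))
    (fd : ι → V) (hfd : ∀ i j, P (e i) (fd j) = if i = j then (1 : k) else 0)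
    (Q2 : ↥(extPow E 𝒱 2) →ₗ[k] Cliff E 𝒱 P)
    (hQ2 : ∀ (v : Fin 2 → V) (dv : Fin 2 → Γ), (∀ i, v i ∈ 𝒱 (dv i)) →
        Q2 (extGen E 𝒱 v)
          = (2 : k)⁻¹ • ∑ σ : Equiv.Perm (Fin 2),
              cocycle E σ dv • clProd E 𝒱 P (v ∘ σ)) :
    ∀ f ∈ Submodule.span k (soSet E 𝒱 P),
      Q2 ((-(2 : k)⁻¹) • ∑ i, extGen E 𝒱 ![f (fd i), e i])
        = (-(2 : k)⁻¹) • ∑ i, cl E 𝒱 P (f (fd i)) * cl E 𝒱 P (e i) := by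
  intro f hf
  let _ := hint.chooseDecomposition
  have hwedge : ∀ i, Q2 (extGen E 𝒱 ![f (fd i), e i])
      = cl E 𝒱 P (f (fd i)) * cl E 𝒱 P (e i) - P (f (fd i)) (e i) • 1 := fun i =>
    quantisation_extGen_of_mem_right E h2 Q2 hQ2 (he i) (f (fd i))
  rw [map_smul, map_sum, Finset.sum_congr rfl fun i _ => hwedge i, Finset.sum_sub_distrib,
    ← Finset.sum_smul, sum_apply_dual_eq_zero_of_mem_span E h2 hPsymm hPdeg he hfd hf, zero_smul,
    sub_zero]

/-- For `f ∈ so_ε(V, P)`, the quantisation of `μ_can⁻¹(f) = -½ Σᵢ f(eⁱ) ∧ eᵢ` in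
the `ε`-Clifford algebra is the Clifford element `-½ Σᵢ f(eⁱ) eᵢ`. -/
theorem quantisation_momentMap_inverse {k Γ V : Type} [Field k] [AddCommGroup Γ]
    [DecidableEq Γ] [AddCommGroup V] [Module k V] [FiniteDimensional k V]
    {ι : Type} [Fintype ι] [DecidableEq ι]
    (E : CommFactor k Γ) (𝒱 : Γ → Submodule k V) (hint : DirectSum.IsInternal 𝒱)
    (P : V →ₗ[k] V →ₗ[k] k)
    (hPsymm : ∀ a b : Γ, ∀ v ∈ 𝒱 a, ∀ w ∈ 𝒱 b, P v w = E.eps a b * P w v)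
    (hPdeg : ∀ a b : Γ, a + b ≠ 0 → ∀ v ∈ 𝒱 a, ∀ w ∈ 𝒱 b, P v w = 0)
    (hPnd : ∀ v : V, (∀ w : V, P v w = 0) → v = 0)
    (h2 : (2 : k) ≠ 0)
    (e : Module.Basis ι k V) (d : ι → Γ) (he : ∀ i, e i ∈ 𝒱 (d i))
    (fd : ι → V) (hfd : ∀ i j, P (e i) (fd j) = if i = j then (1 : k) else 0)
    (Q2 : ↥(extPow E 𝒱 2) →ₗ[k] Cliff E 𝒱 P)
    (hQ2 : ∀ (v : Fin 2 → V) (dv : Fin 2 → Γ), (∀ i, v i ∈ 𝒱 (dv i)) →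
        Q2 (extGen E 𝒱 v)
          = (2 : k)⁻¹ • ∑ σ : Equiv.Perm (Fin 2),
              cocycle E σ dv • clProd E 𝒱 P (v ∘ σ)) :
    ∀ f ∈ Submodule.span k (soSet E 𝒱 P),
      Q2 ((-(2 : k)⁻¹) • ∑ i, extGen E 𝒱 ![f (fd i), e i])
        = (-(2 : k)⁻¹) • ∑ i, cl E 𝒱 P (f (fd i)) * cl E 𝒱 P (e i) :=
  quantisation_momentMap_inverse_general E 𝒱 hint P hPsymm hPdeg h2 e d he fd hfd Q2 hQ2
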